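/- arXiv:2408.09590 — 8 statements merged into one kernel-verified Lean document; each statement's English description precedes it below -/
import Mathlib

section
/- In the Kraus–Lehmann logic, ⊢ B(Bφ → φ) for every formula φ. -/
/-- Formulas of the bimodal language: propositional letters, ⊥, →, and
the operators K (knowledge) and B (belief). -/
inductive Formula : Type
  | atom : Nat → Formula
  | falsum : Formula
  | imp : Formula → Formula → Formula
  | kbox : Formula → Formula
  | bbox : Formula → Formula

namespace Formula

/-- ¬φ := φ → ⊥ -/
def neg (φ : Formula) : Formula := imp φ falsum
/-- φ ∧ ψ := ¬(φ → ¬ψ) -/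
def conj (φ ψ : Formula) : Formula := neg (imp φ (neg ψ))
/-- φ ∨ ψ := ¬φ → ψ -/
def disj (φ ψ : Formula) : Formula := imp (neg φ) ψ
/-- φ ↔ ψ := (φ → ψ) ∧ (ψ → φ) -/
def biimp (φ ψ : Formula) : Formula := conj (imp φ ψ) (imp ψ φ)
/-- ◇_K φ := ¬K¬φ -/
def diaK (φ : Formula) : Formula := neg (kbox (neg φ))
/-- ◇_B φ := ¬B¬φ -/
def diaB (φ : Formula) : Formula := neg (bbox (neg φ))

/-- φ is a propositional tautology: it is true under every assignment of
truth values to formulas that respects → and ⊥ (so atoms and modalized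
formulas are treated as opaque propositional units). -/
def Taut (φ : Formula) : Prop :=
  ∀ v : Formula → Prop,
    (∀ ψ χ, v (imp ψ χ) ↔ (v ψ → v χ)) → ¬ v falsum → v φ

end Formula

open Formula

/-- Derivability in the Kraus–Lehmann logic of knowledge and belief. -/
inductive KL : Formula → Prop
  | taut {φ} : Taut φ → KL φ
  | distK (φ ψ) : KL (imp (kbox (imp φ ψ)) (imp (kbox φ) (kbox ψ)))
  | truth (φ) : KL (imp (kbox φ) φ)
  | negIntro (φ) : KL (imp (neg (kbox φ)) (kbox (neg (kbox φ))))
  | distB (φ ψ) : KL (imp (bbox (imp φ ψ)) (imp (bbox φ) (bbox ψ)))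
  | consB (φ) : KL (imp (bbox φ) (neg (bbox (neg φ))))
  | keb (φ) : KL (imp (kbox φ) (bbox φ))
  | cb (φ) : KL (imp (bbox φ) (kbox (bbox φ)))
  | mp {φ ψ} : KL (imp φ ψ) → KL φ → KL ψ
  | necK {φ} : KL φ → KL (kbox φ)

/-!
Split on Bφ. If Bφ, then B(Bφ → φ) by monotonicity of B, since φ → (Bφ → φ). If ¬Bφ, then
negative introspection for knowledge together with K ⊆ B and conscious belief yields B¬Bφ, and
again B(Bφ → φ) by monotonicity, since ¬Bφ → (Bφ → φ).
-/

namespace KL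

variable {a b c : Formula}

theorem mp_of_taut (h : Taut (imp a b)) (ha : KL a) : KL b :=
  mp (taut h) ha

theorem mp₂_of_taut (h : Taut (imp a (imp b c))) (ha : KL a) (hb : KL b) : KL c :=
  mp (mp (taut h) ha) hb

theorem imp_trans (hab : KL (imp a b)) (hbc : KL (imp b c)) : KL (imp a c) :=
  mp₂_of_taut (fun v hv _ => by simp only [hv]; tauto) hab hbc

theorem contrapose (h : KL (imp a b)) : KL (imp (neg b) (neg a)) :=
  mp_of_taut (fun v hv _ => by simp only [neg, hv]; tauto) h

theorem by_cases (hpos : KL (imp a c)) (hneg : KL (imp (neg a) c)) : KL c :=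
  mp₂_of_taut (fun v hv _ => by simp only [neg, hv]; tauto) hpos hneg

theorem necB (h : KL a) : KL (bbox a) :=
  mp (keb a) (necK h)

theorem monoB (h : KL (imp a b)) : KL (imp (bbox a) (bbox b)) :=
  mp (distB a b) (necB h)

theorem negIntroB (φ : Formula) : KL (imp (neg (bbox φ)) (bbox (neg (bbox φ)))) :=
  imp_trans (contrapose (truth (bbox φ))) <|
    imp_trans (negIntro (bbox φ)) <|
      imp_trans (keb _) (monoB (contrapose (cb φ)))

end KL

/-- in the Kraus–Lehmann logic, ⊢ B(Bφ → φ) for every φ. -/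
theorem KL_belief_in_belief_truth (φ : Formula) :
    KL (bbox (imp (bbox φ) φ)) := by
  have hpos : KL (imp (bbox φ) (bbox (imp (bbox φ) φ))) :=
    KL.monoB (KL.taut fun v hv _ => by simp only [hv]; tauto)
  have hneg : KL (imp (neg (bbox φ)) (bbox (imp (bbox φ) φ))) :=
    KL.imp_trans (KL.negIntroB φ)
      (KL.monoB (KL.taut fun v hv hf => by simp only [neg, hv]; tauto))
  exact KL.by_cases hpos hneg
end

section
/- Every theorem of the logic LSED^R is valid on every Kripke frame (W, R_k, R_b) satisfying: R_k is reflexive, R_b is serial, R_b ⊆ R_k, and for every world x there exists a world z with R_b(x,z) such that every z' with R_k(z,z') satisfies R_b(x,z'). -/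
open Formula

/-- Kripke satisfaction for the bimodal language on a model
(W, R_k, R_b, V). -/
def Sat {W : Type} (Rk Rb : W → W → Prop) (V : Nat → W → Prop) :
    Formula → W → Prop
  | Formula.atom n, w => V n w
  | Formula.falsum, _ => False
  | Formula.imp φ ψ, w => Sat Rk Rb V φ w → Sat Rk Rb V ψ w
  | Formula.kbox φ, w => ∀ v, Rk w v → Sat Rk Rb V φ v
  | Formula.bbox φ, w => ∀ v, Rb w v → Sat Rk Rb V φ v

/-- Derivability in LSED^R (Reasonable Löb-Safe Epistemic Doxastic logic). -/
inductive LSEDR : Formula → Prop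
  | taut {φ} : Taut φ → LSEDR φ
  | distK (φ ψ) : LSEDR (imp (kbox (imp φ ψ)) (imp (kbox φ) (kbox ψ)))
  | truth (φ) : LSEDR (imp (kbox φ) φ)
  | distB (φ ψ) : LSEDR (imp (bbox (imp φ ψ)) (imp (bbox φ) (bbox ψ)))
  | consB (φ) : LSEDR (imp (bbox φ) (neg (bbox (neg φ))))
  | keb (φ) : LSEDR (imp (kbox φ) (bbox φ))
  | rb (φ) : LSEDR (imp (bbox φ) (diaB (kbox φ)))
  | mp {φ ψ} : LSEDR (imp φ ψ) → LSEDR φ → LSEDR ψ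
  | necK {φ} : LSEDR φ → LSEDR (kbox φ)

/-!
Each axiom scheme is valid on the class of frames because of one frame condition: Truth by
reflexivity of `R_k`, Belief Consistency by seriality of `R_b`, Knowledge Entails Belief by
`R_b ⊆ R_k`, and Reasonable Belief because the world `z` of the last condition is an
`R_b`-successor of `x` at which `Kφ` holds whenever `Bφ` holds at `x`. Modus ponens and
necessitation of `K` preserve validity on any frame.
-/

section Frame

variable {W : Type} {Rk Rb : W → W → Prop} {V : Nat → W → Prop} {w : W}

theorem Formula.Taut.sat {φ : Formula} (ht : Taut φ) : Sat Rk Rb V φ w :=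
  ht (Sat Rk Rb V · w) (fun _ _ => Iff.rfl) id

theorem sat_distK (φ ψ : Formula) :
    Sat Rk Rb V (imp (kbox (imp φ ψ)) (imp (kbox φ) (kbox ψ))) w :=
  fun hφψ hφ v hv => hφψ v hv (hφ v hv)

theorem sat_distB (φ ψ : Formula) :
    Sat Rk Rb V (imp (bbox (imp φ ψ)) (imp (bbox φ) (bbox ψ))) w :=
  fun hφψ hφ v hv => hφψ v hv (hφ v hv)

theorem sat_truth (hrefl : ∀ w, Rk w w) (φ : Formula) : Sat Rk Rb V (imp (kbox φ) φ) w :=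
  fun hφ => hφ w (hrefl w)

theorem sat_consB (hser : ∀ w, ∃ v, Rb w v) (φ : Formula) :
    Sat Rk Rb V (imp (bbox φ) (neg (bbox (neg φ)))) w := fun hφ hnφ =>
  let ⟨v, hv⟩ := hser w
  hnφ v hv (hφ v hv)

theorem sat_keb (hsub : ∀ w v, Rb w v → Rk w v) (φ : Formula) :
    Sat Rk Rb V (imp (kbox φ) (bbox φ)) w :=
  fun hφ v hv => hφ v (hsub w v hv)

theorem sat_rb (hRB : ∀ x, ∃ z, Rb x z ∧ ∀ z', Rk z z' → Rb x z') (φ : Formula) :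
    Sat Rk Rb V (imp (bbox φ) (diaB (kbox φ))) w := fun hφ hnKφ =>
  let ⟨z, hz, hzk⟩ := hRB w
  hnKφ z hz fun z' hz' => hφ z' (hzk z' hz')

end Frame

/-- every theorem of LSED^R is valid on every frame
(W, R_k, R_b) with R_k reflexive, R_b serial, R_b ⊆ R_k, and the
Reasonable Belief frame condition. -/
theorem LSEDR_sound (φ : Formula) (h : LSEDR φ)
    (W : Type) (Rk Rb : W → W → Prop)
    (hrefl : ∀ w, Rk w w)
    (hser : ∀ w, ∃ v, Rb w v)
    (hsub : ∀ w v, Rb w v → Rk w v)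
    (hRB : ∀ x, ∃ z, Rb x z ∧ ∀ z', Rk z z' → Rb x z')
    (V : Nat → W → Prop) (w : W) :
    Sat Rk Rb V φ w := by
  induction h generalizing w with
  | taut ht => exact ht.sat
  | distK φ ψ => exact sat_distK φ ψ
  | truth φ => exact sat_truth hrefl φ
  | distB φ ψ => exact sat_distB φ ψ
  | consB φ => exact sat_consB hser φ
  | keb φ => exact sat_keb hsub φ
  | rb φ => exact sat_rb hRB φ
  | mp _ _ ihImp ihAnte => exact ihImp w (ihAnte w)
  | necK _ ih => exact fun v _ => ih v
end

section
/- Positive Belief Introspection fails on the class of LSED^R frames: there exist a Kripke frame (W, R_k, R_b) satisfying R_k reflexive, R_b serial, R_b ⊆ R_k, and the Reasonable Belief condition (for every world x there exists z with R_b(x,z) such that every z' with R_k(z,z') satisfies R_b(x,z')), a valuation, a propositional letter p, and a world w at which B p is true but B B p is false. -/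
open Formula

/-!
Take the knowledge relation to be the reflexive closure of the belief relation. Then
reasonable belief only asks that every world consider possible some world whose
belief-accessible worlds are among its own. On three worlds, let world 0 consider possible
exactly 0 and 1, and let worlds 1 and 2 consider possible only 2. With p true off world 2,
world 0 believes p, but it considers possible world 1, which believes ¬p.
-/

structure IsLSEDRFrame {W : Type} (Rk Rb : W → W → Prop) : Prop where
  refl_k : ∀ x, Rk x x
  serial_b : ∀ x, ∃ y, Rb x y
  b_le_k : ∀ x y, Rb x y → Rk x y
  reasonable_belief : ∀ x, ∃ z, Rb x z ∧ ∀ z', Rk z z' → Rb x z'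

theorem IsLSEDRFrame.reflGen {W : Type} {Rb : W → W → Prop}
    (h : ∀ x, ∃ z, Rb x z ∧ ∀ z', Rb z z' → Rb x z') :
    IsLSEDRFrame (Relation.ReflGen Rb) Rb where
  refl_k _ := .refl
  serial_b x := (h x).imp fun _ hz => hz.1
  b_le_k _ _ := .single
  reasonable_belief x := by
    obtain ⟨z, hxz, hz⟩ := h x
    refine ⟨z, hxz, fun z' hzz' => ?_⟩
    cases hzz' with
    | refl => exact hxz
    | single h => exact hz z' h

def threeWorldBelief (x y : Fin 3) : Prop := if x = 0 then y ≠ 2 else y = 2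

instance : DecidableRel threeWorldBelief := fun _ _ => by unfold threeWorldBelief; infer_instance

theorem threeWorldBelief_reasonable :
    ∀ x, ∃ z, threeWorldBelief x z ∧ ∀ z', threeWorldBelief z z' → threeWorldBelief x z' := by
  decide

/-- Positive Belief Introspection fails on the class of
LSED^R frames: there is a frame satisfying the LSED^R frame conditions,
a valuation, a letter p, and a world where B p holds but B B p fails. -/
theorem positive_belief_introspection_fails :
    ∃ (W : Type) (Rk Rb : W → W → Prop) (V : Nat → W → Prop)
      (p : Nat) (w : W),
      (∀ x, Rk x x) ∧
      (∀ x, ∃ y, Rb x y) ∧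
      (∀ x y, Rb x y → Rk x y) ∧
      (∀ x, ∃ z, Rb x z ∧ ∀ z', Rk z z' → Rb x z') ∧
      Sat Rk Rb V (bbox (atom p)) w ∧
      ¬ Sat Rk Rb V (bbox (bbox (atom p))) w := by
  obtain ⟨refl_k, serial_b, b_le_k, reasonable_belief⟩ :=
    IsLSEDRFrame.reflGen threeWorldBelief_reasonable
  refine ⟨Fin 3, Relation.ReflGen threeWorldBelief, threeWorldBelief, fun _ w => w ≠ 2,
    0, 0, refl_k, serial_b, b_le_k, reasonable_belief, fun _ h => h, fun h => ?_⟩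
  exact h 1 (by decide) 2 (by decide) rfl
end

section
/- Löb's scheme for belief fails on the class of LSED^R frames: there exist a Kripke frame (W, R_k, R_b) satisfying R_k reflexive, R_b serial, R_b ⊆ R_k, and the Reasonable Belief condition (for every world x there exists z with R_b(x,z) such that every z' with R_k(z,z') satisfies R_b(x,z')), a valuation, a propositional letter p, and a world w at which B(B p → p) is true but B p is false. -/
open Formula

/-!
If every world believes exactly one world `t`, then `B φ` holds anywhere iff `φ` holds at `t`;
in particular `B φ → φ` holds at `t`, so `B (B φ → φ)` is valid, while `B p` fails as soon as
`p` fails at `t`. Letting knowledge be the identity plus all arrows into `t` makes such a frame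
an LSED^R frame.
-/

def IsLSEDRFrame_s13 {W : Type} (Rk Rb : W → W → Prop) : Prop :=
  (∀ x, Rk x x) ∧ (∀ x, ∃ y, Rb x y) ∧ (∀ x y, Rb x y → Rk x y) ∧
    (∀ x, ∃ z, Rb x z ∧ ∀ z', Rk z z' → Rb x z')

section Pointed

variable {W : Type}

def pointedK (t : W) : W → W → Prop := fun x y => x = y ∨ y = t

def pointedB (t : W) : W → W → Prop := fun _ y => y = t

theorem isLSEDRFrame_pointed (t : W) : IsLSEDRFrame_s13 (pointedK t) (pointedB t) :=
  ⟨fun _ => Or.inl rfl, fun _ => ⟨t, rfl⟩, fun _ _ => Or.inr,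
    fun _ => ⟨t, rfl, fun _ h => h.elim Eq.symm id⟩⟩

theorem sat_bbox_pointedB (Rk : W → W → Prop) (V : Nat → W → Prop) (t x : W) (φ : Formula) :
    Sat Rk (pointedB t) V (bbox φ) x ↔ Sat Rk (pointedB t) V φ t := by
  simp only [Sat, pointedB, forall_eq]

theorem sat_bbox_imp_bbox_pointedB (Rk : W → W → Prop) (V : Nat → W → Prop) (t x : W)
    (φ : Formula) : Sat Rk (pointedB t) V (bbox (imp (bbox φ) φ)) x := by
  rw [sat_bbox_pointedB]
  exact (sat_bbox_pointedB Rk V t t φ).mp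

end Pointed

/-- Löb's scheme for belief fails on the class of LSED^R
frames: there is a frame satisfying the LSED^R frame conditions, a
valuation, a letter p, and a world where B(B p → p) holds but B p fails. -/
theorem lob_scheme_fails :
    ∃ (W : Type) (Rk Rb : W → W → Prop) (V : Nat → W → Prop)
      (p : Nat) (w : W),
      (∀ x, Rk x x) ∧
      (∀ x, ∃ y, Rb x y) ∧
      (∀ x y, Rb x y → Rk x y) ∧
      (∀ x, ∃ z, Rb x z ∧ ∀ z', Rk z z' → Rb x z') ∧
      Sat Rk Rb V (bbox (imp (bbox (atom p)) (atom p))) w ∧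
      ¬ Sat Rk Rb V (bbox (atom p)) w := by
  obtain ⟨hrefl, hserial, hsub, hreasonable⟩ := isLSEDRFrame_pointed true
  refine ⟨Bool, pointedK true, pointedB true, fun _ x => x = false, 0, false,
    hrefl, hserial, hsub, hreasonable, sat_bbox_imp_bbox_pointedB _ _ _ _ _, ?_⟩
  rw [sat_bbox_pointedB]
  exact Bool.true_eq_false.mp
end

section
/- Sahlqvist correspondence for Reasonable Belief: a Kripke frame (W, R_k, R_b) validates the scheme B p → ◇_B K p (i.e., B p → ¬B¬K p is true at every world under every valuation, for a propositional letter p) if and only if for every world x there exists a world z with R_b(x,z) such that every z' with R_k(z,z') satisfies R_b(x,z'). -/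
open Formula

def reasonableBelief (p : Nat) : Formula :=
  imp (bbox (atom p)) (diaB (kbox (atom p)))

section Frame

variable {W : Type} {Rk Rb : W → W → Prop}

theorem sat_diaB_iff {V : Nat → W → Prop} {φ : Formula} {w : W} :
    Sat Rk Rb V (diaB φ) w ↔ ∃ v, Rb w v ∧ Sat Rk Rb V φ v := by
  simp [diaB, neg, Sat]

theorem sat_reasonableBelief_iff {V : Nat → W → Prop} {p : Nat} {w : W} :
    Sat Rk Rb V (reasonableBelief p) w ↔
      ((∀ v, Rb w v → V p v) → ∃ z, Rb w z ∧ ∀ z', Rk z z' → V p z') := by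
  simp only [reasonableBelief, Sat, sat_diaB_iff]

theorem sat_reasonableBelief_of_frame (hframe : ∀ x, ∃ z, Rb x z ∧ ∀ z', Rk z z' → Rb x z')
    (V : Nat → W → Prop) (p : Nat) (w : W) : Sat Rk Rb V (reasonableBelief p) w := by
  refine sat_reasonableBelief_iff.mpr fun hB => ?_
  obtain ⟨z, hwz, hzK⟩ := hframe w
  exact ⟨z, hwz, fun z' hzz' => hB z' (hzK z' hzz')⟩

/-- The minimal valuation making `B p` true at `x` is `p ↦ R_b(x, ·)`; the scheme at `x` under it
is exactly the frame condition at `x`. -/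
theorem frame_of_sat_reasonableBelief {x : W} {p : Nat}
    (h : Sat Rk Rb (fun _ => Rb x) (reasonableBelief p) x) :
    ∃ z, Rb x z ∧ ∀ z', Rk z z' → Rb x z' :=
  sat_reasonableBelief_iff.mp h fun _ hxv => hxv

end Frame

/-- Sahlqvist correspondence for Reasonable Belief: a frame
validates B p → ◇_B K p iff for every world x there is z with R_b(x,z)
such that every z' with R_k(z,z') satisfies R_b(x,z'). -/
theorem reasonable_belief_correspondence
    (W : Type) (Rk Rb : W → W → Prop) :
    (∀ (p : Nat) (V : Nat → W → Prop) (w : W),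
        Sat Rk Rb V (imp (bbox (atom p)) (diaB (kbox (atom p)))) w) ↔
    (∀ x, ∃ z, Rb x z ∧ ∀ z', Rk z z' → Rb x z') :=
  ⟨fun hvalid x => frame_of_sat_reasonableBelief (hvalid 0 (fun _ => Rb x) x),
    fun hframe p V w => sat_reasonableBelief_of_frame hframe V p w⟩
end

section
/- Sahlqvist correspondence for Supported Belief: a Kripke frame (W, R_k, R_b) validates the scheme B p → ◇_K K p (i.e., B p → ¬K¬K p is true at every world under every valuation, for a propositional letter p) if and only if for every world x there exists a world z with R_k(x,z) such that every z' with R_k(z,z') satisfies R_b(x,z'). -/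
open Formula

section Correspondence

variable {W : Type} {Rk Rb : W → W → Prop} {V : Nat → W → Prop}

theorem sat_diaK_iff {φ : Formula} {w : W} :
    Sat Rk Rb V (diaK φ) w ↔ ∃ v, Rk w v ∧ Sat Rk Rb V φ v := by
  simp [diaK, neg, Sat]

theorem sat_supportedBelief_iff {p : Nat} {w : W} :
    Sat Rk Rb V (imp (bbox (atom p)) (diaK (kbox (atom p)))) w ↔
      ((∀ v, Rb w v → V p v) → ∃ z, Rk w z ∧ ∀ z', Rk z z' → V p z') := by
  simp only [Sat, sat_diaK_iff]

theorem forall_sat_supportedBelief_iff (x : W) :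
    (∀ (p : Nat) (V : Nat → W → Prop),
        Sat Rk Rb V (imp (bbox (atom p)) (diaK (kbox (atom p)))) x) ↔
      ∃ z, Rk x z ∧ ∀ z', Rk z z' → Rb x z' := by
  constructor
  · intro h
    -- the minimal valuation making `B p` true at `x`
    exact sat_supportedBelief_iff.1 (h 0 fun _ => Rb x) fun _ hv => hv
  · rintro ⟨z, hxz, hz⟩ p V
    exact sat_supportedBelief_iff.2 fun hB => ⟨z, hxz, fun z' hz' => hB z' (hz z' hz')⟩

end Correspondence

/-- Sahlqvist correspondence for Supported Belief: a frame
validates B p → ◇_K K p iff for every world x there is z with R_k(x,z)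
such that every z' with R_k(z,z') satisfies R_b(x,z'). -/
theorem supported_belief_correspondence
    (W : Type) (Rk Rb : W → W → Prop) :
    (∀ (p : Nat) (V : Nat → W → Prop) (w : W),
        Sat Rk Rb V (imp (bbox (atom p)) (diaK (kbox (atom p)))) w) ↔
    (∀ x, ∃ z, Rk x z ∧ ∀ z', Rk z z' → Rb x z') := by
  constructor
  · intro h x
    exact (forall_sat_supportedBelief_iff x).1 fun p V => h p V x
  · intro h p V w
    exact (forall_sat_supportedBelief_iff w).2 (h w) p V
end

section
/- Every theorem of LSED^S is a theorem of LSED^R: if ⊢_{LSED^S} φ then ⊢_{LSED^R} φ. -/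
open Formula

/-- Derivability in LSED^S (Supported Löb-Safe Epistemic Doxastic logic). -/
inductive LSEDS : Formula → Prop
  | taut {φ} : Taut φ → LSEDS φ
  | distK (φ ψ) : LSEDS (imp (kbox (imp φ ψ)) (imp (kbox φ) (kbox ψ)))
  | truth (φ) : LSEDS (imp (kbox φ) φ)
  | distB (φ ψ) : LSEDS (imp (bbox (imp φ ψ)) (imp (bbox φ) (bbox ψ)))
  | consB (φ) : LSEDS (imp (bbox φ) (neg (bbox (neg φ))))
  | keb (φ) : LSEDS (imp (kbox φ) (bbox φ))
  | sb (φ) : LSEDS (imp (bbox φ) (diaK (kbox φ)))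
  | mp {φ ψ} : LSEDS (imp φ ψ) → LSEDS φ → LSEDS ψ
  | necK {φ} : LSEDS φ → LSEDS (kbox φ)

/-! Supported Belief is the only axiom of LSED^S missing from LSED^R, and it follows from
Reasonable Belief: `◇_B ψ → ◇_K ψ` is the contrapositive of Knowledge Entails Belief. -/

namespace Formula

theorem taut_imp_trans (φ ψ χ : Formula) :
    Taut (imp (imp φ ψ) (imp (imp ψ χ) (imp φ χ))) := by
  intro v hv _
  simp only [hv]
  tauto

theorem taut_contrapose (φ ψ : Formula) : Taut (imp (imp φ ψ) (imp (neg ψ) (neg φ))) := by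
  intro v hv _
  simp only [neg, hv]
  tauto

end Formula

namespace LSEDR

theorem imp_trans {φ ψ χ : Formula} (h₁ : LSEDR (imp φ ψ)) (h₂ : LSEDR (imp ψ χ)) :
    LSEDR (imp φ χ) :=
  ((taut (taut_imp_trans φ ψ χ)).mp h₁).mp h₂

theorem contrapose {φ ψ : Formula} (h : LSEDR (imp φ ψ)) : LSEDR (imp (neg ψ) (neg φ)) :=
  (taut (taut_contrapose φ ψ)).mp h

theorem diaB_imp_diaK (φ : Formula) : LSEDR (imp (diaB φ) (diaK φ)) :=
  contrapose (keb (neg φ))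

theorem supportedBelief (φ : Formula) : LSEDR (imp (bbox φ) (diaK (kbox φ))) :=
  imp_trans (rb φ) (diaB_imp_diaK (kbox φ))

end LSEDR

/-- every theorem of LSED^S is a theorem of LSED^R. -/
theorem LSEDS_subset_LSEDR (φ : Formula) (h : LSEDS φ) : LSEDR φ := by
  induction h with
  | taut ht => exact LSEDR.taut ht
  | distK φ ψ => exact LSEDR.distK φ ψ
  | truth φ => exact LSEDR.truth φ
  | distB φ ψ => exact LSEDR.distB φ ψ
  | consB φ => exact LSEDR.consB φ
  | keb φ => exact LSEDR.keb φ
  | sb φ => exact LSEDR.supportedBelief φ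
  | mp _ _ ih₁ ih₂ => exact ih₁.mp ih₂
  | necK _ ih => exact ih.necK
end

section
/- Every theorem of the logic LSED^S is valid on every Kripke frame (W, R_k, R_b) satisfying: R_k is reflexive, R_b is serial, R_b ⊆ R_k, and for every world x there exists a world z with R_k(x,z) such that every z' with R_k(z,z') satisfies R_b(x,z'). -/
open Formula

def Valid {W : Type} (Rk Rb : W → W → Prop) (φ : Formula) : Prop :=
  ∀ V w, Sat Rk Rb V φ w

section Soundness

variable {W : Type} {Rk Rb : W → W → Prop}

theorem valid_of_taut {φ : Formula} (h : Taut φ) : Valid Rk Rb φ :=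
  fun V w => h (fun χ => Sat Rk Rb V χ w) (fun _ _ => Iff.rfl) id

theorem valid_distK (φ ψ : Formula) :
    Valid Rk Rb (imp (kbox (imp φ ψ)) (imp (kbox φ) (kbox ψ))) :=
  fun _ _ hImp hφ v hv => hImp v hv (hφ v hv)

theorem valid_distB (φ ψ : Formula) :
    Valid Rk Rb (imp (bbox (imp φ ψ)) (imp (bbox φ) (bbox ψ))) :=
  fun _ _ hImp hφ v hv => hImp v hv (hφ v hv)

theorem valid_truth (hrefl : ∀ w, Rk w w) (φ : Formula) : Valid Rk Rb (imp (kbox φ) φ) :=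
  fun _ w hK => hK w (hrefl w)

theorem valid_consB (hser : ∀ w, ∃ v, Rb w v) (φ : Formula) :
    Valid Rk Rb (imp (bbox φ) (neg (bbox (neg φ)))) := by
  intro _ w hB hBneg
  obtain ⟨v, hv⟩ := hser w
  exact hBneg v hv (hB v hv)

theorem valid_keb (hsub : ∀ w v, Rb w v → Rk w v) (φ : Formula) :
    Valid Rk Rb (imp (kbox φ) (bbox φ)) :=
  fun _ w hK v hv => hK v (hsub w v hv)

theorem valid_sb (hSB : ∀ x, ∃ z, Rk x z ∧ ∀ z', Rk z z' → Rb x z') (φ : Formula) :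
    Valid Rk Rb (imp (bbox φ) (diaK (kbox φ))) := by
  intro _ x hB hKnotK
  obtain ⟨z, hxz, hz⟩ := hSB x
  exact hKnotK z hxz fun z' hzz' => hB z' (hz z' hzz')

theorem Valid.mp {φ ψ : Formula} (hImp : Valid Rk Rb (imp φ ψ)) (hφ : Valid Rk Rb φ) :
    Valid Rk Rb ψ :=
  fun V w => hImp V w (hφ V w)

theorem Valid.kbox {φ : Formula} (hφ : Valid Rk Rb φ) : Valid Rk Rb (kbox φ) :=
  fun V _ v _ => hφ V v

theorem LSEDS.valid {φ : Formula} (h : LSEDS φ)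
    (hrefl : ∀ w, Rk w w)
    (hser : ∀ w, ∃ v, Rb w v)
    (hsub : ∀ w v, Rb w v → Rk w v)
    (hSB : ∀ x, ∃ z, Rk x z ∧ ∀ z', Rk z z' → Rb x z') :
    Valid Rk Rb φ := by
  induction h with
  | taut ht => exact valid_of_taut ht
  | distK φ ψ => exact valid_distK φ ψ
  | truth φ => exact valid_truth hrefl φ
  | distB φ ψ => exact valid_distB φ ψ
  | consB φ => exact valid_consB hser φ
  | keb φ => exact valid_keb hsub φ
  | sb φ => exact valid_sb hSB φ
  | mp _ _ ihImp ihφ => exact ihImp.mp ihφ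
  | necK _ ih => exact ih.kbox

end Soundness

/-- every theorem of LSED^S is valid on every frame
(W, R_k, R_b) with R_k reflexive, R_b serial, R_b ⊆ R_k, and the
Supported Belief frame condition. -/
theorem LSEDS_sound (φ : Formula) (h : LSEDS φ)
    (W : Type) (Rk Rb : W → W → Prop)
    (hrefl : ∀ w, Rk w w)
    (hser : ∀ w, ∃ v, Rb w v)
    (hsub : ∀ w v, Rb w v → Rk w v)
    (hSB : ∀ x, ∃ z, Rk x z ∧ ∀ z', Rk z z' → Rb x z')
    (V : Nat → W → Prop) (w : W) :
    Sat Rk Rb V φ w :=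
  h.valid hrefl hser hsub hSB V w
end
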